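/- If b_k − b_{k−1} ≤ t_k − t_{k−1}, then every 2t_k-pfaffian of the block X_k lies in the ideal generated by the 2t_{k−1}-pfaffians of X_{k−1}; i.e. I_{2t_k}(X_k) ⊆ I_{2t_{k−1}}(X_{k−1}). -/

import Mathlib

open Matrix MvPolynomial

noncomputable def pf {R : Type*} [CommRing R] : (m : ℕ) → Matrix (Fin m) (Fin m) R → R
  | 0, _ => 1
  | 1, _ => 0
  | (m+2), A => ∑ j : Fin (m+1), (-1:R)^(j:ℕ) * A 0 j.succ *
      pf m (A.submatrix (fun i => Fin.succ (j.succAbove i)) (fun i => Fin.succ (j.succAbove i)))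

noncomputable def pfS {R : Type*} [CommRing R] {n : ℕ} (A : Matrix (Fin n) (Fin n) R)
    (s : Finset (Fin n)) : R :=
  pf s.card (A.submatrix (s.orderEmbOfFin rfl) (s.orderEmbOfFin rfl))

abbrev SkewVars (n : ℕ) := {p : Fin n × Fin n // p.1 < p.2}

noncomputable def genSkew (K : Type*) [Field K] (n : ℕ) :
    Matrix (Fin n) (Fin n) (MvPolynomial (SkewVars n) K) :=
  fun i j => if h : i < j then X ⟨(i,j), h⟩ else if h' : j < i then - X ⟨(j,i), h'⟩ else 0

noncomputable def blockPf (K : Type*) [Field K] (n t a b : ℕ) :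
    Ideal (MvPolynomial (SkewVars n) K) :=
  Ideal.span {f | ∃ s : Finset (Fin n), s.card = 2*t ∧
    (∀ i ∈ s, a ≤ (i:ℕ) ∧ (i:ℕ) ≤ b) ∧ f = pfS (genSkew K n) s}

section PfLemmas
variable {R : Type*} [CommRing R]

lemma pf_expand (m : ℕ) (A : Matrix (Fin (m+2)) (Fin (m+2)) R) :
    pf (m+2) A = ∑ j : Fin (m+1), (-1:R)^(j:ℕ) * A 0 j.succ *
      pf m (A.submatrix (fun i => Fin.succ (j.succAbove i)) (fun i => Fin.succ (j.succAbove i))) := by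
  rw [pf]

lemma sgn (a b : ℕ) (h : a % 2 = b % 2) : (-1:R)^a = (-1:R)^b := by
  conv_lhs => rw [← Nat.div_add_mod a 2, pow_add, pow_mul, neg_one_sq, one_pow, one_mul]
  conv_rhs => rw [← Nat.div_add_mod b 2, pow_add, pow_mul, neg_one_sq, one_pow, one_mul]
  rw [h]

lemma val_succAbove {n : ℕ} (p : Fin (n+1)) (i : Fin n) :
    ((p.succAbove i : Fin (n+1)) : ℕ) = if (i:ℕ) < p then (i:ℕ) else i+1 := by
  simp only [Fin.succAbove, Fin.lt_def, Fin.coe_castSucc]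
  split_ifs <;> simp

lemma val_predAbove {n : ℕ} (p : Fin n) (i : Fin (n+1)) :
    ((p.predAbove i : Fin n) : ℕ) = if (p:ℕ) < i then (i:ℕ)-1 else i := by
  simp only [Fin.predAbove, Fin.lt_def, Fin.coe_castSucc]
  split_ifs <;> simp

lemma pf_lastRow : ∀ (m : ℕ) (A : Matrix (Fin (m+2)) (Fin (m+2)) R),
    (∀ i j, A i j = - A j i) →
    pf (m+2) A = (-1:R)^(m+1) * ∑ c : Fin (m+1), (-1:R)^(c:ℕ) *
      A (Fin.last (m+1)) c.castSucc *
      pf m (A.submatrix (fun i => Fin.castSucc (c.succAbove i))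
        (fun i => Fin.castSucc (c.succAbove i)))
  | 0, A, hA => by
    have h10 : Fin.last 1 = (1 : Fin 2) := rfl
    simp [pf, hA 0 1, h10]
  | 1, A, hA => by
    simp [pf]
  | (k+2), A, hA => by
    have IH := pf_lastRow k
    -- abbreviations for the two kinds of generic double-sum terms
    set F : Fin (k+2) → Fin (k+1) → R := fun d q =>
      (-1:R)^((d:ℕ)+(k+1)+(q:ℕ)) * A 0 (d.castSucc).succ *
      A (Fin.last (k+3)) ((d.castSucc.succAbove q.castSucc).succ) *
      pf k (A.submatrix (fun i => (d.castSucc.succAbove ((q.succAbove i).castSucc)).succ)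
        (fun i => (d.castSucc.succAbove ((q.succAbove i).castSucc)).succ)) with hF
    set F' : Fin (k+2) → Fin (k+1) → R := fun c p =>
      (-1:R)^((k+3)+((c:ℕ)+1)+(p:ℕ)) * A (Fin.last (k+3)) (c.succ.castSucc) *
      A 0 ((c.succ.succAbove p.succ).castSucc) *
      pf k (A.submatrix (fun i => (c.succ.succAbove ((p.succAbove i).succ)).castSucc)
        (fun i => (c.succ.succAbove ((p.succAbove i).succ)).castSucc)) with hF'
    rw [pf_expand]
    rw [Fin.sum_univ_castSucc (n := k+2)]
    conv_rhs => rw [Fin.sum_univ_succ]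
    -- special terms
    have h1 : (-1:R)^((Fin.last (k+2) : Fin (k+3)):ℕ) * A 0 (Fin.last (k+2)).succ *
        pf (k+2) (A.submatrix (fun i => Fin.succ ((Fin.last (k+2)).succAbove i))
          (fun i => Fin.succ ((Fin.last (k+2)).succAbove i)))
        = (-1:R)^(k+3) * ((-1:R)^(((0:Fin (k+3))):ℕ) *
            A (Fin.last (k+3)) (Fin.castSucc (0 : Fin (k+3))) *
            pf (k+2) (A.submatrix (fun i => Fin.castSucc ((0:Fin (k+3)).succAbove i))
              (fun i => Fin.castSucc ((0:Fin (k+3)).succAbove i)))) := by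
      have hmat : (fun i : Fin (k+2) => Fin.succ ((Fin.last (k+2)).succAbove i))
          = (fun i : Fin (k+2) => Fin.castSucc ((0:Fin (k+3)).succAbove i)) := by
        funext i
        apply Fin.ext
        simp [val_succAbove]
      rw [hmat]
      rw [show Fin.castSucc (0 : Fin (k+3)) = (0 : Fin (k+4)) from rfl]
      rw [show (Fin.last (k+2)).succ = Fin.last (k+3) from rfl]
      rw [hA (Fin.last (k+3)) 0]
      simp [Fin.val_last, pow_succ]
      ring
    -- generic LHS
    have h2 : (∑ d : Fin (k+2), (-1:R)^((Fin.castSucc d : Fin (k+3)):ℕ) *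
          A 0 (Fin.castSucc d).succ *
          pf (k+2) (A.submatrix (fun i => Fin.succ ((Fin.castSucc d).succAbove i))
            (fun i => Fin.succ ((Fin.castSucc d).succAbove i))))
        = ∑ d : Fin (k+2), ∑ q : Fin (k+1), F d q := by
      refine Finset.sum_congr rfl (fun d _ => ?_)
      rw [IH _ (by intro i j; simp only [Matrix.submatrix_apply]; exact hA _ _)]
      rw [Finset.mul_sum, Finset.mul_sum]
      refine Finset.sum_congr rfl (fun q _ => ?_)
      simp only [Matrix.submatrix_apply, Matrix.submatrix_submatrix, Function.comp_def, hF]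
      have hrow : ((Fin.castSucc d).succAbove (Fin.last (k+1))).succ = Fin.last (k+3) := by
        apply Fin.ext
        simp only [Fin.val_succ, Fin.val_last, val_succAbove, Fin.coe_castSucc]
        all_goals (first | omega | (split_ifs <;> omega))
      rw [hrow]
      rw [show ((Fin.castSucc d : Fin (k+3)):ℕ) = (d:ℕ) from rfl]
      rw [show ((d:ℕ)+(k+1)+(q:ℕ)) = (d:ℕ)+((k+1)+(q:ℕ)) from by ring, pow_add, pow_add]
      ring
    -- generic RHS
    have h3 : ((-1:R)^(k+3) * ∑ c : Fin (k+2), (-1:R)^((Fin.succ c : Fin (k+3)):ℕ) *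
          A (Fin.last (k+3)) (Fin.castSucc (Fin.succ c)) *
          pf (k+2) (A.submatrix (fun i => Fin.castSucc ((Fin.succ c).succAbove i))
            (fun i => Fin.castSucc ((Fin.succ c).succAbove i))))
        = ∑ c : Fin (k+2), ∑ p : Fin (k+1), F' c p := by
      rw [Finset.mul_sum]
      refine Finset.sum_congr rfl (fun c _ => ?_)
      rw [pf_expand]
      have hrow : Fin.castSucc ((Fin.succ c).succAbove 0) = (0 : Fin (k+4)) := by
        apply Fin.ext
        simp only [Fin.val_succ, Fin.coe_castSucc, val_succAbove, Fin.val_zero]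
        simp
      rw [Finset.mul_sum, Finset.mul_sum]
      refine Finset.sum_congr rfl (fun p _ => ?_)
      simp only [Matrix.submatrix_apply, Matrix.submatrix_submatrix, Function.comp_def, hF',
        hrow, Fin.val_succ]
      rw [show ((k+3)+((c:ℕ)+1)+(p:ℕ)) = (k+3)+(((c:ℕ)+1)+(p:ℕ)) from by ring,
        pow_add, pow_add]
      ring
    have hbij : (∑ d : Fin (k+2), ∑ q : Fin (k+1), F d q)
        = ∑ c : Fin (k+2), ∑ p : Fin (k+1), F' c p := by
      rw [← Finset.sum_product', ← Finset.sum_product', Finset.univ_product_univ]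
      refine Fintype.sum_equiv
        ⟨fun x => (x.1.succAbove x.2, x.2.predAbove x.1),
         fun x => (x.1.succAbove x.2, x.2.predAbove x.1), ?_, ?_⟩ _ _ ?_
      · intro x
        refine Prod.ext ?_ ?_ <;>
          (apply Fin.ext; simp only [val_succAbove, val_predAbove]; all_goals (first | omega | (split_ifs <;> omega)))
      · intro x
        refine Prod.ext ?_ ?_ <;>
          (apply Fin.ext; simp only [val_succAbove, val_predAbove]; all_goals (first | omega | (split_ifs <;> omega)))
      · rintro ⟨d, q⟩
        show F d q = F' (d.succAbove q) (q.predAbove d)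
        have e1 : (d.castSucc).succ
            = ((d.succAbove q).succ.succAbove (q.predAbove d).succ).castSucc := by
          apply Fin.ext
          simp only [Fin.val_succ, Fin.coe_castSucc, val_succAbove, val_predAbove]
          all_goals (first | omega | (split_ifs <;> omega))
        have e2 : (d.castSucc.succAbove q.castSucc).succ = (d.succAbove q).succ.castSucc := by
          apply Fin.ext
          simp only [Fin.val_succ, Fin.coe_castSucc, val_succAbove, val_predAbove]
          all_goals (first | omega | (split_ifs <;> omega))
        have e3 : (fun i : Fin k => (d.castSucc.succAbove ((q.succAbove i).castSucc)).succ)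
            = (fun i : Fin k =>
                ((d.succAbove q).succ.succAbove (((q.predAbove d).succAbove i).succ)).castSucc) := by
          funext i
          apply Fin.ext
          simp only [Fin.val_succ, Fin.coe_castSucc, val_succAbove, val_predAbove]
          all_goals (first | omega | (split_ifs <;> omega))
        have epar : (-1:R)^((d:ℕ)+(k+1)+(q:ℕ))
            = (-1:R)^((k+3)+(((d.succAbove q : Fin (k+2)):ℕ)+1)+((q.predAbove d : Fin (k+1)):ℕ)) := by
          apply sgn
          simp only [val_succAbove, val_predAbove]
          all_goals (first | omega | (split_ifs <;> omega))
        simp only [hF, hF']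
        rw [e1, e2, e3, epar]
        ring
    rw [mul_add]
    linear_combination h1 + h2 + hbij - h3
  termination_by m => m

section helpers
variable {R : Type*} [CommRing R]

lemma pfS_eq {n m : ℕ} (A : Matrix (Fin n) (Fin n) R) (s : Finset (Fin n)) (h : s.card = m) :
    pfS A s = pf m (A.submatrix (s.orderEmbOfFin h) (s.orderEmbOfFin h)) := by
  subst h; rfl

lemma genSkew_skew (K : Type*) [Field K] (n : ℕ) (i j : Fin n) :
    genSkew K n i j = - genSkew K n j i := by
  rcases lt_trichotomy i j with h|h|h
  · simp [genSkew, h, asymm h, h.ne']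
  · subst h; simp [genSkew]
  · simp [genSkew, h, asymm h, h.ne']

end helpers

lemma key {K : Type*} [Field K] {n t' a' b' : ℕ} (ht' : 1 ≤ t') :
    ∀ (k b : ℕ), b + t' ≤ b' + (t' + k) → ∀ s : Finset (Fin n), s.card = 2*(t'+k) →
      (∀ i ∈ s, a' ≤ (i:ℕ) ∧ (i:ℕ) ≤ b) → pfS (genSkew K n) s ∈ blockPf K n t' a' b'
  | 0, b, hb, s, hcard, hbound => by
      apply Ideal.subset_span
      exact ⟨s, by simpa using hcard,
        fun i hi => ⟨(hbound i hi).1, le_trans (hbound i hi).2 (by omega)⟩, rfl⟩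
  | (k+1), b, hb, s, hcard, hbound => by
      have hs : s.card = 2*(t'+k) + 2 := by rw [hcard]; ring
      set m : ℕ := 2*(t'+k) with hm
      set e := s.orderEmbOfFin hs with he
      have hemem : ∀ i, e i ∈ s := fun i => Finset.orderEmbOfFin_mem s hs i
      have hemono : StrictMono e := (s.orderEmbOfFin hs).strictMono
      -- the max element bound
      have hlast_le : ((e (Fin.last (m+1))):ℕ) ≤ b := (hbound _ (hemem _)).2
      have hb1 : 1 ≤ b := by
        have h0 : e 0 < e (Fin.last (m+1)) := hemono (by
          simp only [Fin.lt_def, Fin.val_zero, Fin.val_last]; omega)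
        have := (Fin.lt_def.mp h0)
        omega
      rw [pfS_eq (h := hs), pf_lastRow _ _ (fun i j => by
        simp only [Matrix.submatrix_apply]; exact genSkew_skew K n _ _)]
      apply Ideal.mul_mem_left
      apply Ideal.sum_mem
      intro c _
      apply Ideal.mul_mem_left
      -- identify the inner pfaffian with pfS of the erased set
      set u : Finset (Fin n) := (s.erase (e (Fin.last (m+1)))).erase (e c.castSucc) with hu
      have hne : e c.castSucc ≠ e (Fin.last (m+1)) :=
        fun hh => (Fin.castSucc_lt_last c).ne (hemono.injective hh)
      have hcmem : e c.castSucc ∈ s.erase (e (Fin.last (m+1))) :=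
        Finset.mem_erase.mpr ⟨hne, hemem _⟩
      have hucard : u.card = m := by
        rw [hu, Finset.card_erase_of_mem hcmem, Finset.card_erase_of_mem (hemem _), hs]
        omega
      have hfeq : (fun i : Fin m => e ((c.succAbove i).castSucc)) = ⇑(u.orderEmbOfFin hucard) := by
        apply Finset.orderEmbOfFin_unique
        · intro x
          rw [hu]
          refine Finset.mem_erase.mpr ⟨?_, Finset.mem_erase.mpr ⟨?_, hemem _⟩⟩
          · exact fun hh =>
              Fin.succAbove_ne c x (Fin.castSucc_injective _ (hemono.injective hh))
          · exact fun hh => (Fin.castSucc_lt_last _).ne (hemono.injective hh)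
        · intro x y hxy
          exact hemono (by
            simpa [Fin.castSucc_lt_castSucc_iff] using (Fin.strictMono_succAbove c) hxy)
      have hmat : ((genSkew K n).submatrix e e).submatrix
            (fun i => Fin.castSucc (c.succAbove i)) (fun i => Fin.castSucc (c.succAbove i))
          = (genSkew K n).submatrix (u.orderEmbOfFin hucard) (u.orderEmbOfFin hucard) := by
        rw [Matrix.submatrix_submatrix]
        rw [show (⇑e ∘ fun i : Fin m => Fin.castSucc (c.succAbove i))
            = fun i : Fin m => e ((c.succAbove i).castSucc) from rfl, hfeq]
      rw [hmat, ← pfS_eq (h := hucard)]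
      refine key ht' k (b-1) (by omega) u (by rw [hucard]) ?_
      intro i hi
      have his : i ∈ s := Finset.mem_of_mem_erase (Finset.mem_of_mem_erase hi)
      refine ⟨(hbound i his).1, ?_⟩
      have hrange : i ∈ Set.range ⇑(s.orderEmbOfFin hs) := by
        rw [Finset.range_orderEmbOfFin]; exact his
      obtain ⟨j, rfl⟩ := hrange
      have hjne : (s.orderEmbOfFin hs) j ≠ e (Fin.last (m+1)) :=
        (Finset.mem_erase.mp (Finset.mem_of_mem_erase (by rw [← hu]; exact hi))).1
      have hjlt : j < Fin.last (m+1) :=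
        lt_of_le_of_ne (Fin.le_last j) (fun hh => hjne (by rw [hh]))
      have := Fin.lt_def.mp (hemono hjlt)
      have hq : (s.orderEmbOfFin hs) j = e j := rfl
      rw [hq]
      omega
  termination_by k => k

end PfLemmas

/-- if `b_k − b_{k−1} ≤ t_k − t_{k−1}` (written `b + t' ≤ b' + t` without
natural subtraction, where unprimed data is the `k`-th block and primed data the
`(k−1)`-st), then `I_{2t_k}(X_k) ⊆ I_{2t_{k−1}}(X_{k−1})`. -/
theorem pfaffian_ideal_containment_of_column_overlap (K : Type*) [Field K]
    (n t t' a a' b b' : ℕ) (hn : b < n) (ht : 1 ≤ t) (ht' : 1 ≤ t')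
    (haa : a' ≤ a) (hbb : b' ≤ b)
    (hyp : b + t' ≤ b' + t) :
    blockPf K n t a b ≤ blockPf K n t' a' b' := by
  rw [blockPf, Ideal.span_le]
  rintro f ⟨s, hcard, hcond, rfl⟩
  exact key ht' (t - t') b (by omega) s (by rw [hcard]; omega)
    (fun i hi => ⟨le_trans haa (hcond i hi).1, (hcond i hi).2⟩)
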